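/- Under the connectivity assumption, any sequence {x^k} generated by the algorithm is bounded in (ℝ^d)^n. -/

import Mathlib

open Finset Filter

noncomputable def obj {d n : ℕ} {J : Type*} (a : J → EuclideanSpace ℝ (Fin d))
    (A : Fin n → Finset J) (dhat : Fin n → J → ℝ)
    (B : Fin n → Finset (Fin n)) (lhat : Fin n → Fin n → ℝ)
    (x : Fin n → EuclideanSpace ℝ (Fin d)) : ℝ :=
  (∑ i, ∑ j ∈ A i, max (‖x i - a j‖ - dhat i j) 0 ^ 2)
    + (1 / 2) * ∑ i, ∑ q ∈ B i, max (‖x i - x q‖ - lhat i q) 0 ^ 2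

noncomputable def projBall {d : ℕ} (a : EuclideanSpace ℝ (Fin d)) (r : ℝ)
    (z : EuclideanSpace ℝ (Fin d)) : EuclideanSpace ℝ (Fin d) :=
  if ‖z - a‖ ≤ r then z else a + (r / ‖z - a‖) • (z - a)

/-- The Coop. PPM algorithm: `X (k+1)` is obtained from `X k` by updating the
blocks successively for `i = 1, …, n`. -/
def IsPPM {d n : ℕ} {J : Type*} (a : J → EuclideanSpace ℝ (Fin d))
    (A : Fin n → Finset J) (dhat : Fin n → J → ℝ)
    (B : Fin n → Finset (Fin n)) (lhat : Fin n → Fin n → ℝ)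
    (X : ℕ → Fin n → EuclideanSpace ℝ (Fin d)) : Prop :=
  ∀ (k : ℕ) (i : Fin n),
    X (k + 1) i = (1 / 2 : ℝ) • X k i
      + (1 / (2 * (((A i).card : ℝ) + ((B i).card : ℝ)))) •
        ((∑ j ∈ A i, projBall (a j) (dhat i j) (X k i))
          + ∑ q ∈ B i, projBall (if q < i then X (k + 1) q else X k q) (lhat i q) (X k i))

/-!
For fixed values of the other blocks, the part of `obj` depending on `x i` is a sum of
`L_i / 4` squared distances to balls, and the Coop. PPM update of block `i` is the gradient
step of step size `1 / L_i` on it. The majorization `dist(y, C)² ≤ ‖y - P_C x‖²` shows that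
such a step does not increase that sum, hence `obj` is nonincreasing along a sweep and
`obj (X k) ≤ obj (X 0)`. A sublevel set of `obj` is bounded: `obj` bounds the distance from
`x i` to each anchor `a j`, `j ∈ A i`, and to each neighbour `x q`, `q ∈ B i`, and a
connectivity chain carries the bound from a target with an anchor back to any given target.
-/

open RealInnerProductSpace

section Projection

variable {d : ℕ} {a x y z : EuclideanSpace ℝ (Fin d)} {r : ℝ}

lemma norm_projBall_sub_le (hr : 0 ≤ r) : ‖projBall a r z - a‖ ≤ r := by
  unfold projBall
  split_ifs with h
  · exact h
  · have hpos : 0 < ‖z - a‖ := hr.trans_lt (not_le.mp h)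
    rw [add_sub_cancel_left, norm_smul, Real.norm_of_nonneg (by positivity),
      div_mul_cancel₀ _ hpos.ne']

lemma norm_sub_projBall (hr : 0 ≤ r) : ‖z - projBall a r z‖ = max (‖z - a‖ - r) 0 := by
  unfold projBall
  split_ifs with h
  · simp [h]
  · have hlt : r < ‖z - a‖ := not_le.mp h
    have hpos : 0 < ‖z - a‖ := hr.trans_lt hlt
    rw [sub_add_eq_sub_sub, ← one_smul ℝ (z - a), smul_smul, mul_one, ← sub_smul, one_smul,
      norm_smul, Real.norm_of_nonneg (sub_nonneg.mpr ((div_le_one hpos).mpr hlt.le)),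
      max_eq_left (sub_nonneg.mpr hlt.le)]
    field_simp

/-- The distance from `y` to the ball is at most `‖y - projBall a r x‖`, expanded around `x`. -/
lemma sq_max_norm_sub_le (hr : 0 ≤ r) :
    max (‖y - a‖ - r) 0 ^ 2
      ≤ max (‖x - a‖ - r) 0 ^ 2 + 2 * ⟪y - x, x - projBall a r x⟫ + ‖y - x‖ ^ 2 := by
  set p := projBall a r x
  have hdist : max (‖y - a‖ - r) 0 ≤ ‖y - p‖ := by
    refine max_le ?_ (norm_nonneg _)
    linarith [norm_sub_le_norm_sub_add_norm_sub y p a, norm_projBall_sub_le (a := a) (z := x) hr]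
  have hexpand : ‖y - p‖ ^ 2 = ‖y - x‖ ^ 2 + 2 * ⟪y - x, x - p⟫ + ‖x - p‖ ^ 2 := by
    rw [← norm_add_sq_real, sub_add_sub_cancel]
  rw [norm_sub_projBall hr] at hexpand
  nlinarith [le_max_right (‖y - a‖ - r) 0]

/-- With `g = ∑ t, (x - projBall (c t) (r t) x)` the step is `y = x - g / (2 m)`, and summing the
majorizations of `sq_max_norm_sub_le` gives a total change of `-3 ‖g‖² / (4 m) ≤ 0`. -/
lemma sum_sq_max_norm_sub_le_of_averaged_step {ι : Type*} {s : Finset ι} (hs : s.Nonempty)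
    {c : ι → EuclideanSpace ℝ (Fin d)} {r : ι → ℝ} (hr : ∀ t ∈ s, 0 ≤ r t)
    (hy : y = (1 / 2 : ℝ) • x + (1 / (2 * (#s : ℝ))) • ∑ t ∈ s, projBall (c t) (r t) x) :
    ∑ t ∈ s, max (‖y - c t‖ - r t) 0 ^ 2 ≤ ∑ t ∈ s, max (‖x - c t‖ - r t) 0 ^ 2 := by
  set m : ℝ := (s.card : ℝ)
  have hm : 0 < m := by simpa [m] using hs.card_pos
  set g := ∑ t ∈ s, (x - projBall (c t) (r t) x) with hg
  have hstep : y - x = (-(1 / (2 * m))) • g := by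
    rw [hy, hg, sum_sub_distrib, sum_const, ← Nat.cast_smul_eq_nsmul ℝ]
    match_scalars <;> field_simp; ring
  have hsum : ∑ t ∈ s, max (‖y - c t‖ - r t) 0 ^ 2
      ≤ ∑ t ∈ s, max (‖x - c t‖ - r t) 0 ^ 2 + 2 * ⟪y - x, g⟫ + m * ‖y - x‖ ^ 2 := by
    have := sum_le_sum fun t ht ↦ sq_max_norm_sub_le (a := c t) (x := x) (y := y) (hr t ht)
    rwa [sum_add_distrib, sum_add_distrib, ← mul_sum, ← inner_sum, sum_const, nsmul_eq_mul]
      at this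
  have hchange : 2 * ⟪y - x, g⟫ + m * ‖y - x‖ ^ 2 = -(3 / 4) * (‖g‖ ^ 2 / m) := by
    rw [hstep, real_inner_smul_left, real_inner_self_eq_norm_sq, norm_smul, mul_pow,
      Real.norm_eq_abs, sq_abs]
    field_simp
    ring
  have : 0 ≤ ‖g‖ ^ 2 / m := by positivity
  linarith

end Projection

section Objective

variable {d n : ℕ} {J : Type*} (a : J → EuclideanSpace ℝ (Fin d)) (A : Fin n → Finset J)
  (dhat : Fin n → J → ℝ) (B : Fin n → Finset (Fin n)) (lhat : Fin n → Fin n → ℝ)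

/-- The part of `obj` that depends on block `i`, as a function of its value `z`; each link
`q ∈ B i` occurs twice in `obj`, which cancels the factor `1 / 2`. -/
noncomputable def blockObj (x : Fin n → EuclideanSpace ℝ (Fin d)) (i : Fin n)
    (z : EuclideanSpace ℝ (Fin d)) : ℝ :=
  (∑ j ∈ A i, max (‖z - a j‖ - dhat i j) 0 ^ 2) + ∑ q ∈ B i, max (‖z - x q‖ - lhat i q) 0 ^ 2

variable {a A dhat B lhat} {x : Fin n → EuclideanSpace ℝ (Fin d)} {i : Fin n}
  {z w : EuclideanSpace ℝ (Fin d)}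

lemma obj_update_sub_obj_update (hBirr : ∀ i, i ∉ B i) (hBsymm : ∀ i q, q ∈ B i ↔ i ∈ B q)
    (hlsymm : ∀ i q, lhat i q = lhat q i) :
    obj a A dhat B lhat (Function.update x i z) - obj a A dhat B lhat (Function.update x i w)
      = blockObj a A dhat B lhat x i z - blockObj a A dhat B lhat x i w := by
  set u := Function.update x i z
  set v := Function.update x i w
  set D : Fin n → ℝ := fun q ↦
    max (‖z - x q‖ - lhat i q) 0 ^ 2 - max (‖w - x q‖ - lhat i q) 0 ^ 2
  have hanchors : ∑ p, ∑ j ∈ A p, (max (‖u p - a j‖ - dhat p j) 0 ^ 2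
      - max (‖v p - a j‖ - dhat p j) 0 ^ 2)
      = ∑ j ∈ A i, (max (‖z - a j‖ - dhat i j) 0 ^ 2 - max (‖w - a j‖ - dhat i j) 0 ^ 2) := by
    rw [sum_eq_single i (fun p _ hp ↦ by simp [u, v, hp]) (by simp)]
    simp [u, v]
  -- row `i` contributes all of `D`, and row `p ≠ i` contributes `D p` through its link to `i`
  have hlink (p : Fin n) : ∑ q ∈ B p, (max (‖u p - u q‖ - lhat p q) 0 ^ 2
      - max (‖v p - v q‖ - lhat p q) 0 ^ 2)
      = (if p = i then ∑ q ∈ B i, D q else 0) + if p ∈ B i then D p else 0 := by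
    by_cases hp : p = i
    · subst hp
      rw [if_pos rfl, if_neg (hBirr p), add_zero]
      refine sum_congr rfl fun q hq ↦ ?_
      have hq : q ≠ p := fun h ↦ hBirr p (h ▸ hq)
      simp [u, v, D, hq]
    · simp only [if_neg hp, zero_add, hBsymm i p]
      rw [← sum_ite_eq' (B p) i (fun _ ↦ D p)]
      refine sum_congr rfl fun q _ ↦ ?_
      by_cases hq : q = i
      · subst hq
        simp [u, v, D, hp, norm_sub_rev (x p), hlsymm p]
      · simp [u, v, hp, hq]
  have hlinks : ∑ p, ∑ q ∈ B p, (max (‖u p - u q‖ - lhat p q) 0 ^ 2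
      - max (‖v p - v q‖ - lhat p q) 0 ^ 2) = 2 * ∑ q ∈ B i, D q := by
    simp only [hlink, sum_add_distrib, sum_ite_eq', mem_univ, if_true, sum_ite_mem, univ_inter]
    ring
  unfold obj blockObj
  simp only [D, sum_sub_distrib] at hanchors hlinks
  linarith

lemma obj_update_le (hBirr : ∀ i, i ∉ B i) (hBsymm : ∀ i q, q ∈ B i ↔ i ∈ B q)
    (hlsymm : ∀ i q, lhat i q = lhat q i)
    (hz : blockObj a A dhat B lhat x i z ≤ blockObj a A dhat B lhat x i (x i)) :
    obj a A dhat B lhat (Function.update x i z) ≤ obj a A dhat B lhat x := by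
  have := obj_update_sub_obj_update (a := a) (A := A) (dhat := dhat) (x := x) (i := i) (z := z)
    (w := x i) hBirr hBsymm hlsymm
  rw [Function.update_eq_self] at this
  linarith

end Objective

section Algorithm

variable {d n : ℕ} {J : Type*} {a : J → EuclideanSpace ℝ (Fin d)} {A : Fin n → Finset J}
  {dhat : Fin n → J → ℝ} {B : Fin n → Finset (Fin n)} {lhat : Fin n → Fin n → ℝ}

def sweep (X : ℕ → Fin n → EuclideanSpace ℝ (Fin d)) (k j : ℕ) (p : Fin n) :
    EuclideanSpace ℝ (Fin d) :=
  if (p : ℕ) < j then X (k + 1) p else X k p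

lemma sweep_zero (X : ℕ → Fin n → EuclideanSpace ℝ (Fin d)) (k : ℕ) : sweep X k 0 = X k := by
  funext p
  simp [sweep]

lemma sweep_of_le (X : ℕ → Fin n → EuclideanSpace ℝ (Fin d)) (k : ℕ) {j : ℕ} (hj : n ≤ j) :
    sweep X k j = X (k + 1) := by
  funext p
  simp [sweep, p.isLt.trans_le hj]

lemma sweep_self (X : ℕ → Fin n → EuclideanSpace ℝ (Fin d)) (k : ℕ) (i : Fin n) :
    sweep X k i i = X k i := by
  simp [sweep]

lemma sweep_succ (X : ℕ → Fin n → EuclideanSpace ℝ (Fin d)) (k : ℕ) (i : Fin n) :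
    sweep X k (i + 1) = Function.update (sweep X k i) i (X (k + 1) i) := by
  funext p
  by_cases hp : p = i
  · simp [sweep, hp]
  · have : (p : ℕ) < i + 1 ↔ (p : ℕ) < i := by grind [Fin.val_ne_iff]
    simp [sweep, hp, this]

lemma IsPPM.eq_averaged_step {X : ℕ → Fin n → EuclideanSpace ℝ (Fin d)}
    (hX : IsPPM a A dhat B lhat X) (k : ℕ) (i : Fin n) :
    X (k + 1) i = (1 / 2 : ℝ) • X k i
      + (1 / (2 * ((#(A i) : ℝ) + (#(B i) : ℝ)))) •
        ((∑ j ∈ A i, projBall (a j) (dhat i j) (X k i))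
          + ∑ q ∈ B i, projBall (sweep X k i q) (lhat i q) (X k i)) := by
  simp only [hX k i, sweep, Fin.lt_def]

lemma IsPPM.blockObj_le (hdhat : ∀ i, ∀ j ∈ A i, 0 ≤ dhat i j)
    (hlhat : ∀ i, ∀ q ∈ B i, 0 ≤ lhat i q) (hcard : ∀ i, 1 ≤ #(A i) + #(B i))
    {X : ℕ → Fin n → EuclideanSpace ℝ (Fin d)} (hX : IsPPM a A dhat B lhat X) (k : ℕ)
    (i : Fin n) :
    blockObj a A dhat B lhat (sweep X k i) i (X (k + 1) i)
      ≤ blockObj a A dhat B lhat (sweep X k i) i (X k i) := by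
  -- the anchors `a j` and the current neighbours `sweep X k i q` as one family of balls
  let c : J ⊕ Fin n → EuclideanSpace ℝ (Fin d) := Sum.elim a (sweep X k i)
  let r : J ⊕ Fin n → ℝ := Sum.elim (dhat i) (lhat i)
  have hs : ((A i).disjSum (B i)).Nonempty := by
    rw [← card_pos, card_disjSum]
    exact hcard i
  have hr : ∀ t ∈ (A i).disjSum (B i), 0 ≤ r t := by
    rintro (j | q) ht
    · exact hdhat i j (inl_mem_disjSum.mp ht)
    · exact hlhat i q (inr_mem_disjSum.mp ht)
  have hstep := sum_sq_max_norm_sub_le_of_averaged_step hs hr (c := c)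
    (x := X k i) (y := X (k + 1) i)
    (by simpa [sum_disjSum, c, r] using hX.eq_averaged_step k i)
  simpa [blockObj, sum_disjSum, c, r] using hstep

lemma IsPPM.obj_succ_le (hdhat : ∀ i, ∀ j ∈ A i, 0 ≤ dhat i j)
    (hlhat : ∀ i, ∀ q ∈ B i, 0 ≤ lhat i q) (hBirr : ∀ i, i ∉ B i)
    (hBsymm : ∀ i q, q ∈ B i ↔ i ∈ B q) (hlsymm : ∀ i q, lhat i q = lhat q i)
    (hcard : ∀ i, 1 ≤ #(A i) + #(B i)) {X : ℕ → Fin n → EuclideanSpace ℝ (Fin d)}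
    (hX : IsPPM a A dhat B lhat X) (k : ℕ) :
    obj a A dhat B lhat (X (k + 1)) ≤ obj a A dhat B lhat (X k) := by
  have hsweep : Antitone fun j ↦ obj a A dhat B lhat (sweep X k j) := by
    refine antitone_nat_of_succ_le fun j ↦ ?_
    by_cases hj : j < n
    · have hblock := hX.blockObj_le hdhat hlhat hcard k ⟨j, hj⟩
      rw [← sweep_self X k ⟨j, hj⟩] at hblock
      simpa [sweep_succ X k ⟨j, hj⟩] using obj_update_le hBirr hBsymm hlsymm hblock
    · rw [sweep_of_le X k (not_lt.mp hj), sweep_of_le X k (by omega)]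
  simpa [sweep_zero, sweep_of_le X k le_rfl] using hsweep (Nat.zero_le n)

end Algorithm

lemma le_add_sqrt_of_sq_max_sub_le {t r F : ℝ} (h : max (t - r) 0 ^ 2 ≤ F) : t ≤ r + √F := by
  have := Real.sqrt_le_sqrt h
  rw [Real.sqrt_sq (le_max_right _ _)] at this
  linarith [le_max_left (t - r) 0]

lemma single_le_sum_sum {ι κ : Type*} [Fintype ι] {s : ι → Finset κ} {f : ι → κ → ℝ}
    (hf : ∀ i, ∀ j ∈ s i, 0 ≤ f i j) {i : ι} {j : κ} (hj : j ∈ s i) :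
    f i j ≤ ∑ i, ∑ j ∈ s i, f i j :=
  (single_le_sum (hf i) hj).trans
    (single_le_sum (f := fun i ↦ ∑ j ∈ s i, f i j) (fun i _ ↦ sum_nonneg (hf i)) (mem_univ i))

section Boundedness

variable {d n : ℕ} {J : Type*} {a : J → EuclideanSpace ℝ (Fin d)} {A : Fin n → Finset J}
  {dhat : Fin n → J → ℝ} {B : Fin n → Finset (Fin n)} {lhat : Fin n → Fin n → ℝ}
  {x : Fin n → EuclideanSpace ℝ (Fin d)} {F : ℝ}

lemma norm_sub_anchor_le_of_obj_le (hF : obj a A dhat B lhat x ≤ F) {i : Fin n} {j : J}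
    (hj : j ∈ A i) : ‖x i - a j‖ ≤ dhat i j + √F := by
  refine le_add_sqrt_of_sq_max_sub_le (le_trans ?_ hF)
  have hlinks : 0 ≤ ∑ p, ∑ q ∈ B p, max (‖x p - x q‖ - lhat p q) 0 ^ 2 := by positivity
  have := single_le_sum_sum (f := fun i j ↦ max (‖x i - a j‖ - dhat i j) 0 ^ 2)
    (fun _ _ _ ↦ sq_nonneg _) hj
  unfold obj
  linarith

lemma norm_sub_neighbor_le_of_obj_le (hF : obj a A dhat B lhat x ≤ F) {i q : Fin n}
    (hq : q ∈ B i) : ‖x i - x q‖ ≤ lhat i q + √(2 * F) := by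
  refine le_add_sqrt_of_sq_max_sub_le (le_trans ?_ (by linarith : 2 * obj a A dhat B lhat x ≤ _))
  have hanchors : 0 ≤ ∑ p, ∑ j ∈ A p, max (‖x p - a j‖ - dhat p j) 0 ^ 2 := by positivity
  have := single_le_sum_sum (f := fun i q ↦ max (‖x i - x q‖ - lhat i q) 0 ^ 2)
    (fun _ _ _ ↦ sq_nonneg _) hq
  unfold obj
  linarith

lemma exists_forall_norm_le_of_chain {S : Set (Fin n → EuclideanSpace ℝ (Fin d))}
    {ρ : Fin n → J → ℝ} {σ : Fin n → Fin n → ℝ}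
    (hA : ∀ x ∈ S, ∀ i, ∀ j ∈ A i, ‖x i - a j‖ ≤ ρ i j)
    (hB : ∀ x ∈ S, ∀ i, ∀ q ∈ B i, ‖x i - x q‖ ≤ σ i q) (r : ℕ) (c : ℕ → Fin n)
    (hc : ∀ t < r, c (t + 1) ∈ B (c t)) (hr : (A (c r)).Nonempty) :
    ∃ C, ∀ x ∈ S, ‖x (c 0)‖ ≤ C := by
  induction r generalizing c with
  | zero =>
    obtain ⟨j, hj⟩ := hr
    exact ⟨‖a j‖ + ρ (c 0) j, fun x hx ↦
      (norm_le_norm_add_norm_sub' _ (a j)).trans (by gcongr; exact hA x hx _ j hj)⟩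
  | succ r ih =>
    obtain ⟨C, hC⟩ := ih (fun t ↦ c (t + 1)) (fun t ht ↦ hc (t + 1) (by omega)) hr
    exact ⟨C + σ (c 0) (c 1), fun x hx ↦ (norm_le_norm_add_norm_sub' _ (x (c 1))).trans
      (add_le_add (hC x hx) (hB x hx _ _ (hc 0 (by omega))))⟩

lemma isBounded_setOf_obj_le
    (hconn : ∀ i : Fin n, ∃ (r : ℕ) (c : ℕ → Fin n), c 0 = i ∧
      (∀ t, t < r → c (t + 1) ∈ B (c t)) ∧ (A (c r)).Nonempty) (F : ℝ) :
    Bornology.IsBounded {x | obj a A dhat B lhat x ≤ F} := by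
  refine Bornology.forall_isBounded_image_eval_iff.mp fun i ↦ ?_
  obtain ⟨r, c, rfl, hc, hr⟩ := hconn i
  obtain ⟨C, hC⟩ := exists_forall_norm_le_of_chain (S := {x | obj a A dhat B lhat x ≤ F})
    (fun _ hx _ _ ↦ norm_sub_anchor_le_of_obj_le hx)
    (fun _ hx _ _ ↦ norm_sub_neighbor_le_of_obj_le hx) r c hc hr
  refine isBounded_iff_forall_norm_le.mpr ⟨C, ?_⟩
  rintro _ ⟨x, hx, rfl⟩
  exact hC x hx

end Boundedness

theorem stmt9_general (d n : ℕ) {J : Type*}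
    (a : J → EuclideanSpace ℝ (Fin d))
    (A : Fin n → Finset J) (dhat : Fin n → J → ℝ)
    (B : Fin n → Finset (Fin n)) (lhat : Fin n → Fin n → ℝ)
    (hdhat : ∀ i, ∀ j ∈ A i, 0 ≤ dhat i j)
    (hlhat : ∀ i, ∀ q ∈ B i, 0 ≤ lhat i q)
    (hBirr : ∀ i : Fin n, i ∉ B i)
    (hBsymm : ∀ i q : Fin n, q ∈ B i ↔ i ∈ B q)
    (hlsymm : ∀ i q : Fin n, lhat i q = lhat q i)
    (hcard : ∀ i : Fin n, 1 ≤ (A i).card + (B i).card)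
    (X : ℕ → Fin n → EuclideanSpace ℝ (Fin d))
    (hX : IsPPM a A dhat B lhat X)
    (hconn : ∀ i : Fin n, ∃ (r : ℕ) (c : ℕ → Fin n), c 0 = i ∧
      (∀ t, t < r → c (t + 1) ∈ B (c t)) ∧ (A (c r)).Nonempty) :
    Bornology.IsBounded (Set.range X) := by
  have hdescent : Antitone fun k ↦ obj a A dhat B lhat (X k) :=
    antitone_nat_of_succ_le (hX.obj_succ_le hdhat hlhat hBirr hBsymm hlsymm hcard)
  refine (isBounded_setOf_obj_le (a := a) (dhat := dhat) (lhat := lhat) hconn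
    (obj a A dhat B lhat (X 0))).subset ?_
  rintro _ ⟨k, rfl⟩
  exact hdescent (Nat.zero_le k)

theorem stmt9 (d n : ℕ) (hd : 1 ≤ d) (hn : 1 ≤ n) {J : Type*} [Fintype J]
    (a : J → EuclideanSpace ℝ (Fin d))
    (A : Fin n → Finset J) (dhat : Fin n → J → ℝ)
    (B : Fin n → Finset (Fin n)) (lhat : Fin n → Fin n → ℝ)
    (hdhat : ∀ i, ∀ j ∈ A i, 0 ≤ dhat i j)
    (hlhat : ∀ i, ∀ q ∈ B i, 0 ≤ lhat i q)
    (hBirr : ∀ i : Fin n, i ∉ B i)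
    (hBsymm : ∀ i q : Fin n, q ∈ B i ↔ i ∈ B q)
    (hlsymm : ∀ i q : Fin n, lhat i q = lhat q i)
    (hcard : ∀ i : Fin n, 1 ≤ (A i).card + (B i).card)
    (X : ℕ → Fin n → EuclideanSpace ℝ (Fin d))
    (hX : IsPPM a A dhat B lhat X)
    (hconn : ∀ i : Fin n, ∃ (r : ℕ) (c : ℕ → Fin n), c 0 = i ∧
      (∀ t, t < r → c (t + 1) ∈ B (c t)) ∧ (A (c r)).Nonempty) :
    Bornology.IsBounded (Set.range X) :=
  stmt9_general d n a A dhat B lhat hdhat hlhat hBirr hBsymm hlsymm hcard X hX hconn
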